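/- arXiv:2205.03328 — 2 statements merged into one kernel-verified Lean document; each statement's English description precedes it below -/
import Mathlib

section
/- Fix reals c > 0, λs > 0, λ > 0 and α ∈ [0, 1/2). Then there exist a constant C > 0 and an integer N such that for every integer n ≥ N, setting n0 = ⌈n^{1−α}/c⌉ (the size of each mini-ring when ñ = c·n^α jammers are placed equidistantly on a ring of n nodes), one has F(n, n0) ≥ C·√n. That is, with Θ(n^α) equidistant jammers and α < 1/2, the version age of every node is Ω(√n). -/
open Finset

/-- Closed-form stationary version age of a single node in a mini-ring of `n0` gossiping
nodes cut out of a ring of `n` nodes (source rate `lamS`, per-node update rate `lam/n`,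
per-link rate `lam/2`). -/
noncomputable def ringNodeAge (lamS lam : ℝ) (n n0 : ℕ) : ℝ :=
  (lamS / lam) *
    ((∑ j ∈ Finset.Icc 1 (n0 - 1), ∏ k ∈ Finset.Icc 1 j, 1 / ((k : ℝ) / (n : ℝ) + 1))
      + ((n : ℝ) / (n0 : ℝ)) * ∏ k ∈ Finset.Icc 1 (n0 - 1), 1 / ((k : ℝ) / (n : ℝ) + 1))

/-! Every product `∏_{k ≤ j} 1/(1 + k/n)` with `j ≤ √n` is at least `exp (-j²/n) ≥ e⁻¹`.
For `α < 1/2` the mini-ring size `n^(1-α)/c` eventually exceeds `√n`, so the sum in `F(n, n0)`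
has at least `⌊√n⌋ ≥ √n/2` such terms. -/

open Real Filter

lemma exp_neg_le_one_div_add_one {x : ℝ} (hx : -1 < x) : exp (-x) ≤ 1 / (x + 1) := by
  rw [exp_neg, inv_eq_one_div]
  exact one_div_le_one_div_of_le (by linarith) (add_one_le_exp x)

lemma exp_neg_sq_div_le_prod (n j : ℕ) :
    exp (-((j : ℝ) ^ 2 / n)) ≤ ∏ k ∈ Icc 1 j, 1 / ((k : ℝ) / n + 1) := by
  calc exp (-((j : ℝ) ^ 2 / n)) = ∏ _k ∈ Icc 1 j, exp (-((j : ℝ) / n)) := by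
        rw [prod_const, Nat.card_Icc, add_tsub_cancel_right, ← exp_nat_mul]
        ring_nf
    _ ≤ ∏ k ∈ Icc 1 j, 1 / ((k : ℝ) / n + 1) := by
        refine prod_le_prod (fun _ _ => (exp_pos _).le) fun k hk => ?_
        have hkj : (k : ℝ) ≤ j := by exact_mod_cast (mem_Icc.1 hk).2
        calc exp (-((j : ℝ) / n)) ≤ exp (-((k : ℝ) / n)) := by gcongr
          _ ≤ 1 / ((k : ℝ) / n + 1) :=
            exp_neg_le_one_div_add_one (neg_one_lt_zero.trans_le (by positivity))

lemma mul_exp_neg_one_le_sum_prod {m n N : ℕ} (hmn : m ^ 2 ≤ n) (hmN : m ≤ N) :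
    m * exp (-1) ≤ ∑ j ∈ Icc 1 N, ∏ k ∈ Icc 1 j, 1 / ((k : ℝ) / n + 1) := by
  calc m * exp (-1) = ∑ _j ∈ Icc 1 m, exp (-1) := by simp
    _ ≤ ∑ j ∈ Icc 1 m, ∏ k ∈ Icc 1 j, 1 / ((k : ℝ) / n + 1) := by
        refine sum_le_sum fun j hj => (exp_le_exp.2 ?_).trans (exp_neg_sq_div_le_prod n j)
        have hjn : (j : ℝ) ^ 2 ≤ n := by
          exact_mod_cast (Nat.pow_le_pow_left (mem_Icc.1 hj).2 2).trans hmn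
        linarith [div_le_one_of_le₀ hjn (Nat.cast_nonneg n)]
    _ ≤ ∑ j ∈ Icc 1 N, ∏ k ∈ Icc 1 j, 1 / ((k : ℝ) / n + 1) :=
        sum_le_sum_of_subset_of_nonneg (Icc_subset_Icc_right hmN) fun _ _ _ => by positivity

lemma sqrt_le_two_mul_nat_sqrt (n : ℕ) : √(n : ℝ) ≤ 2 * Nat.sqrt n := by
  rcases Nat.eq_zero_or_pos n with rfl | hn
  · simp
  · have : (1 : ℝ) ≤ Nat.sqrt n := by exact_mod_cast Nat.sqrt_pos.2 hn
    linarith [real_sqrt_lt_nat_sqrt_succ (a := n)]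

lemma mul_sum_le_ringNodeAge {lamS lam : ℝ} (hlamS : 0 ≤ lamS) (hlam : 0 ≤ lam) (n n0 : ℕ) :
    lamS / lam * ∑ j ∈ Icc 1 (n0 - 1), ∏ k ∈ Icc 1 j, 1 / ((k : ℝ) / n + 1)
      ≤ ringNodeAge lamS lam n n0 :=
  mul_le_mul_of_nonneg_left (le_add_of_nonneg_right (by positivity)) (by positivity)

lemma mul_sqrt_le_ringNodeAge {lamS lam : ℝ} (hlamS : 0 ≤ lamS) (hlam : 0 ≤ lam) {n n0 : ℕ}
    (hn0 : Nat.sqrt n < n0) :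
    lamS / lam * (exp (-1) / 2) * √(n : ℝ) ≤ ringNodeAge lamS lam n n0 := by
  have hsqrt := sqrt_le_two_mul_nat_sqrt n
  calc lamS / lam * (exp (-1) / 2) * √(n : ℝ)
      ≤ lamS / lam * (Nat.sqrt n * exp (-1)) := by
        rw [mul_assoc]
        exact mul_le_mul_of_nonneg_left (by nlinarith [exp_pos (-1)]) (by positivity)
    _ ≤ lamS / lam * ∑ j ∈ Icc 1 (n0 - 1), ∏ k ∈ Icc 1 j, 1 / ((k : ℝ) / n + 1) := by
        gcongr
        exact mul_exp_neg_one_le_sum_prod (Nat.sqrt_le' n) (by omega)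
    _ ≤ ringNodeAge lamS lam n n0 := mul_sum_le_ringNodeAge hlamS hlam n n0

lemma eventually_mul_sqrt_lt_rpow (c : ℝ) {α : ℝ} (hα : α < 1 / 2) :
    ∀ᶠ x : ℝ in atTop, c * √x < x ^ (1 - α) := by
  have hgrow : Tendsto (fun x : ℝ => x ^ (1 / 2 - α)) atTop atTop :=
    tendsto_rpow_atTop (by linarith)
  filter_upwards [hgrow.eventually_gt_atTop c, eventually_gt_atTop 0] with x hcx hx
  calc c * √x < x ^ (1 / 2 - α) * √x := by gcongr
    _ = x ^ (1 - α) := by rw [sqrt_eq_rpow, ← rpow_add hx]; ring_nf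

lemma eventually_nat_sqrt_lt_ceil_rpow_div {c α : ℝ} (hc : 0 < c) (hα : α < 1 / 2) :
    ∀ᶠ n : ℕ in atTop, Nat.sqrt n < ⌈(n : ℝ) ^ (1 - α) / c⌉₊ := by
  filter_upwards [tendsto_natCast_atTop_atTop.eventually (eventually_mul_sqrt_lt_rpow c hα)]
    with n hn
  exact Nat.lt_ceil.2 (nat_sqrt_le_real_sqrt.trans_lt ((lt_div_iff₀' hc).2 hn))

theorem equidistant_jammers_age_lower_bound_small_alpha_general
    (c lamS lam α : ℝ) (hc : 0 < c) (hlamS : 0 < lamS) (hlam : 0 < lam)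
    (hα2 : α < 1 / 2) :
    ∃ C : ℝ, 0 < C ∧ ∃ N : ℕ, ∀ n : ℕ, N ≤ n →
      C * Real.sqrt n ≤ ringNodeAge lamS lam n ⌈(n : ℝ) ^ (1 - α) / c⌉₊ := by
  obtain ⟨N, hN⟩ := eventually_atTop.1 (eventually_nat_sqrt_lt_ceil_rpow_div hc hα2)
  exact ⟨lamS / lam * (exp (-1) / 2), by positivity, N,
    fun n hn => mul_sqrt_le_ringNodeAge hlamS.le hlam.le (hN n hn)⟩

/-- With `ñ = c·n^α` equidistant jammers and `α ∈ [0, 1/2)`, each mini-ring has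
`n0 = ⌈n^(1-α)/c⌉` nodes and the version age of every node is `Ω(√n)`:
`F(n, n0) ≥ C·√n` for large `n`. -/
theorem equidistant_jammers_age_lower_bound_small_alpha
    (c lamS lam α : ℝ) (hc : 0 < c) (hlamS : 0 < lamS) (hlam : 0 < lam)
    (hα1 : 0 ≤ α) (hα2 : α < 1 / 2) :
    ∃ C : ℝ, 0 < C ∧ ∃ N : ℕ, ∀ n : ℕ, N ≤ n →
      C * Real.sqrt n ≤ ringNodeAge lamS lam n ⌈(n : ℝ) ^ (1 - α) / c⌉₊ :=
  equidistant_jammers_age_lower_bound_small_alpha_general c lamS lam α hc hlamS hlam hα2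
end

section
/- Fix reals c > 0, λs > 0, λ > 0 and α ∈ [1/2, 1). Then there exist a constant C > 0 and an integer N such that for every integer n ≥ N, setting ñ = ⌈c·n^α⌉ and D(n) = ((ñ−1)·F(n, 1) + (n−ñ+1)·F(n, n−ñ+1))/n (the average version age in the most harmful jammer configuration, with ñ−1 isolated nodes and one mini-ring of n−ñ+1 nodes), one has D(n) ≤ C·n^α. That is, with Θ(n^α) jammers and α ≥ 1/2, the average version age is O(n^α). -/
open Finset

lemma one_add_sum_le_prod_add_one {ι : Type*} (s : Finset ι) {f : ι → ℝ}
    (hf : ∀ i ∈ s, 0 ≤ f i) : 1 + ∑ i ∈ s, f i ≤ ∏ i ∈ s, (f i + 1) := by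
  induction s using Finset.cons_induction with
  | empty => simp
  | cons a s _ ih =>
    rw [sum_cons, prod_cons]
    have hfa : 0 ≤ f a := hf a (mem_cons_self a s)
    have hfs : ∀ i ∈ s, 0 ≤ f i := fun i hi => hf i (mem_cons_of_mem hi)
    nlinarith [ih hfs, sum_nonneg hfs]

lemma sum_Icc_one_natCast_mul_two (j : ℕ) : (∑ k ∈ Icc 1 j, (k : ℝ)) * 2 = j * (j + 1) := by
  induction j with
  | zero => simp
  | succ j ih =>
    rw [sum_Icc_succ_top (by omega), add_mul, ih]
    push_cast
    ring

lemma sum_Icc_one_le_of_le_one_of_le_div_sq {f : ℕ → ℝ} {a : ℝ} (ha : 0 ≤ a)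
    (hf_one : ∀ j, f j ≤ 1) (hf_sq : ∀ j, 0 < j → f j ≤ a / j ^ 2) (L m : ℕ) :
    ∑ j ∈ Icc 1 L, f j ≤ m + 2 * a / (m + 1) := by
  rw [← sum_filter_add_sum_filter_not (Icc 1 L) (· ≤ m)]
  have h_head : ∑ j ∈ (Icc 1 L).filter (· ≤ m), f j ≤ m := by
    have hsub : (Icc 1 L).filter (· ≤ m) ⊆ Icc 1 m := fun j hj => by
      simp only [mem_filter, mem_Icc] at hj ⊢
      omega
    calc ∑ j ∈ (Icc 1 L).filter (· ≤ m), f j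
        ≤ ((Icc 1 L).filter (· ≤ m)).card := by simpa using sum_le_sum fun j _ => hf_one j
      _ ≤ (Icc 1 m).card := by exact_mod_cast card_le_card hsub
      _ = m := by simp
  have h_tail : ∑ j ∈ (Icc 1 L).filter (¬ · ≤ m), f j ≤ 2 * a / (m + 1) := by
    have hsub : (Icc 1 L).filter (¬ · ≤ m) ⊆ Ioo m (L + 1) := fun j hj => by
      simp only [mem_filter, mem_Icc, mem_Ioo] at hj ⊢
      omega
    calc ∑ j ∈ (Icc 1 L).filter (¬ · ≤ m), f j
        ≤ ∑ j ∈ (Icc 1 L).filter (¬ · ≤ m), a * ((j : ℝ) ^ 2)⁻¹ := by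
          refine sum_le_sum fun j hj => ?_
          rw [← div_eq_mul_inv]
          exact hf_sq j (by simp only [mem_filter, mem_Icc] at hj; omega)
      _ = a * ∑ j ∈ (Icc 1 L).filter (¬ · ≤ m), ((j : ℝ) ^ 2)⁻¹ := (mul_sum _ _ _).symm
      _ ≤ a * ∑ j ∈ Ioo m (L + 1), ((j : ℝ) ^ 2)⁻¹ := by gcongr
      _ ≤ a * (2 / (m + 1)) := by gcongr; exact sum_Ioo_inv_sq_le m (L + 1)
      _ = 2 * a / (m + 1) := by ring
  linarith

lemma sqrt_le_rpow_of_half_le {x α : ℝ} (hx : 1 ≤ x) (hα : 1 / 2 ≤ α) : √x ≤ x ^ α := by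
  rw [Real.sqrt_eq_rpow]
  exact Real.rpow_le_rpow_of_exponent_le hx hα

noncomputable def decayProd (n j : ℕ) : ℝ :=
  ∏ k ∈ Icc 1 j, 1 / ((k : ℝ) / (n : ℝ) + 1)

lemma ringNodeAge_eq (lamS lam : ℝ) (n n0 : ℕ) :
    ringNodeAge lamS lam n n0 =
      lamS / lam * (∑ j ∈ Icc 1 (n0 - 1), decayProd n j + n / n0 * decayProd n (n0 - 1)) :=
  rfl

lemma ringNodeAge_one (lamS lam : ℝ) (n : ℕ) : ringNodeAge lamS lam n 1 = lamS / lam * n := by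
  simp [ringNodeAge]

lemma decayProd_nonneg (n j : ℕ) : 0 ≤ decayProd n j :=
  prod_nonneg fun _ _ => by positivity

lemma decayProd_le_one (n j : ℕ) : decayProd n j ≤ 1 := by
  refine prod_le_one (fun k _ => by positivity) fun k _ => ?_
  rw [div_le_one (by positivity)]
  linarith [show 0 ≤ (k : ℝ) / n by positivity]

lemma decayProd_le_two_mul_div_sq {n j : ℕ} (hn : 0 < n) (hj : 0 < j) :
    decayProd n j ≤ 2 * n / j ^ 2 := by
  have hn' : (0 : ℝ) < n := by exact_mod_cast hn
  have h_prod : (j : ℝ) ^ 2 / (2 * n) ≤ ∏ k ∈ Icc 1 j, ((k : ℝ) / n + 1) :=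
    calc (j : ℝ) ^ 2 / (2 * n) ≤ (∑ k ∈ Icc 1 j, (k : ℝ)) / n := by
          rw [div_le_div_iff₀ (by positivity) hn']
          nlinarith [sum_Icc_one_natCast_mul_two j]
      _ = ∑ k ∈ Icc 1 j, (k : ℝ) / n := sum_div _ _ _
      _ ≤ 1 + ∑ k ∈ Icc 1 j, (k : ℝ) / n := by linarith
      _ ≤ ∏ k ∈ Icc 1 j, ((k : ℝ) / n + 1) :=
          one_add_sum_le_prod_add_one _ fun k _ => by positivity
  calc decayProd n j = 1 / ∏ k ∈ Icc 1 j, ((k : ℝ) / n + 1) := by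
        rw [decayProd, prod_div_distrib, prod_const_one]
    _ ≤ 1 / ((j : ℝ) ^ 2 / (2 * n)) := one_div_le_one_div_of_le (by positivity) h_prod
    _ = 2 * n / j ^ 2 := one_div_div _ _

lemma sum_decayProd_le {n : ℕ} (hn : 0 < n) (L : ℕ) :
    ∑ j ∈ Icc 1 L, decayProd n j ≤ 5 * √n := by
  have h_sqrt_lt : √(n : ℝ) < Nat.sqrt n + 1 := Real.real_sqrt_lt_nat_sqrt_succ
  have h_tail : (n : ℝ) / (Nat.sqrt n + 1) ≤ √n := by
    rw [div_le_iff₀ (by positivity)]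
    calc (n : ℝ) = √n * √n := (Real.mul_self_sqrt n.cast_nonneg).symm
      _ ≤ √n * (Nat.sqrt n + 1) := by gcongr
  calc ∑ j ∈ Icc 1 L, decayProd n j ≤ Nat.sqrt n + 2 * (2 * n) / (Nat.sqrt n + 1) :=
        sum_Icc_one_le_of_le_one_of_le_div_sq (by positivity) (decayProd_le_one n)
          (fun _ hj => decayProd_le_two_mul_div_sq hn hj) L (Nat.sqrt n)
    _ = Nat.sqrt n + 4 * ((n : ℝ) / (Nat.sqrt n + 1)) := by ring
    _ ≤ √n + 4 * √n := by gcongr; exact Real.nat_sqrt_le_real_sqrt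
    _ = 5 * √n := by ring

lemma natCast_mul_ringNodeAge_le {lamS lam : ℝ} (hlamS : 0 ≤ lamS) (hlam : 0 ≤ lam)
    {n n0 : ℕ} (hn0 : 0 < n0) (hn0n : n0 ≤ n) :
    n0 * ringNodeAge lamS lam n n0 ≤ lamS / lam * n * (5 * √n + 1) := by
  have hn0' : (0 : ℝ) < n0 := by exact_mod_cast hn0
  have h_sum := sum_decayProd_le (hn0.trans_le hn0n) (n0 - 1)
  have h_last := decayProd_le_one n (n0 - 1)
  calc (n0 : ℝ) * ringNodeAge lamS lam n n0
      = lamS / lam * (n0 * ∑ j ∈ Icc 1 (n0 - 1), decayProd n j + n * decayProd n (n0 - 1)) := by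
        rw [ringNodeAge_eq]
        field_simp
    _ ≤ lamS / lam * (n * (5 * √n) + n * 1) := by
        gcongr
        exact sum_nonneg fun j _ => decayProd_nonneg n j
    _ = lamS / lam * n * (5 * √n + 1) := by ring

theorem most_harmful_jammers_age_upper_bound_large_alpha_general
    (c lamS lam α : ℝ) (hc : 0 < c) (hlamS : 0 < lamS) (hlam : 0 < lam)
    (hα1 : 1 / 2 ≤ α) :
    ∃ C : ℝ, 0 < C ∧ ∃ N : ℕ, ∀ n : ℕ, N ≤ n →
      ((⌈c * (n : ℝ) ^ α⌉₊ - 1 : ℝ) * ringNodeAge lamS lam n 1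
          + ((n - ⌈c * (n : ℝ) ^ α⌉₊ + 1 : ℕ) : ℝ)
            * ringNodeAge lamS lam n (n - ⌈c * (n : ℝ) ^ α⌉₊ + 1)) / (n : ℝ)
        ≤ C * (n : ℝ) ^ α := by
  refine ⟨lamS / lam * (c + 6), by positivity, 1, fun n hn => ?_⟩
  have hn' : (1 : ℝ) ≤ n := by exact_mod_cast hn
  set t := ⌈c * (n : ℝ) ^ α⌉₊
  have ht : 1 ≤ t := Nat.one_le_iff_ne_zero.mpr (Nat.ceil_pos.mpr (by positivity)).ne'
  have ht' : (t : ℝ) - 1 ≤ c * (n : ℝ) ^ α := by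
    linarith [Nat.ceil_lt_add_one (by positivity : 0 ≤ c * (n : ℝ) ^ α)]
  have h_ring := natCast_mul_ringNodeAge_le hlamS.le hlam.le (n := n) (n0 := n - t + 1)
    (by omega) (by omega)
  have h_sqrt := sqrt_le_rpow_of_half_le hn' hα1
  have h_one : 1 ≤ (n : ℝ) ^ α := Real.one_le_rpow hn' (by linarith)
  rw [ringNodeAge_one, div_le_iff₀ (by positivity)]
  calc ((t : ℝ) - 1) * (lamS / lam * n)
        + ((n - t + 1 : ℕ) : ℝ) * ringNodeAge lamS lam n (n - t + 1)
      ≤ c * (n : ℝ) ^ α * (lamS / lam * n) + lamS / lam * n * (5 * √n + 1) := by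
        gcongr ?_ * _ + ?_
    _ = lamS / lam * n * (c * (n : ℝ) ^ α + 5 * √n + 1) := by ring
    _ ≤ lamS / lam * n * (c * (n : ℝ) ^ α + 5 * (n : ℝ) ^ α + (n : ℝ) ^ α) := by gcongr
    _ = lamS / lam * (c + 6) * (n : ℝ) ^ α * n := by ring

/-- With `ñ = ⌈c·n^α⌉` jammers in the most harmful configuration (`ñ - 1` isolated nodes and
one mini-ring of `n - ñ + 1` nodes) and `α ∈ [1/2, 1)`, the average version age
`D(n) = ((ñ-1)·F(n,1) + (n-ñ+1)·F(n, n-ñ+1))/n` is `O(n^α)`: `D(n) ≤ C·n^α` for large `n`. -/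
theorem most_harmful_jammers_age_upper_bound_large_alpha
    (c lamS lam α : ℝ) (hc : 0 < c) (hlamS : 0 < lamS) (hlam : 0 < lam)
    (hα1 : 1 / 2 ≤ α) (hα2 : α < 1) :
    ∃ C : ℝ, 0 < C ∧ ∃ N : ℕ, ∀ n : ℕ, N ≤ n →
      ((⌈c * (n : ℝ) ^ α⌉₊ - 1 : ℝ) * ringNodeAge lamS lam n 1
          + ((n - ⌈c * (n : ℝ) ^ α⌉₊ + 1 : ℕ) : ℝ)
            * ringNodeAge lamS lam n (n - ⌈c * (n : ℝ) ^ α⌉₊ + 1)) / (n : ℝ)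
        ≤ C * (n : ℝ) ^ α :=
  most_harmful_jammers_age_upper_bound_large_alpha_general c lamS lam α hc hlamS hlam hα1
end
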